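/- arXiv:1308.2471 — 5 statements merged into one kernel-verified Lean document; each statement's English description precedes it below -/
import Mathlib

section
/- For every graph G, eye(G) ≤ dim(P_G) ≤ 2·eye(G), where P_G is the incidence poset of G. -/
/-!
Restricting a realizer of `P_G` to the vertices gives an eye family: if `x ∉ yz`, some linear
extension puts the edge `yz`, and with it both `y` and `z`, below `x`.

Conversely, let `L₁, …, Lₛ` be an eye family. For each `Lᵢ` and for its reverse take the linear
extension of `P_G` that places every edge just above its larger endpoint. A vertex pair is
separated already by `L₁` and its reverse. If `x ∉ yz`, the eye condition gives an `Lᵢ` in which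
`x` lies outside the interval spanned by `y` and `z`, so that in the extension built from `Lᵢ` or
from its reverse the edge `yz` lies below `x`. A comparability of an edge with anything above it,
common to all the extensions, passes to both endpoints of the edge by transitivity; so an edge is
below no vertex and below no other edge.
-/

open SimpleGraph

/-- `x` is covered by `y` with respect to the order-like relation `le`. -/
def CovRel {α : Type*} (le : α → α → Prop) (x y : α) : Prop :=
  le x y ∧ x ≠ y ∧ ∀ z, le x z → le z y → z = x ∨ z = y

/-- The cover graph of (the poset given by) the relation `le`. -/
def coverGraph {α : Type*} (le : α → α → Prop) : SimpleGraph α where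
  Adj x y := CovRel le x y ∨ CovRel le y x
  symm := ⟨by intro x y h; tauto⟩
  loopless := ⟨by intro x h; rcases h with ⟨_, h2, _⟩ | ⟨_, h2, _⟩ <;> exact h2 rfl⟩

/-- A family of linear orders whose intersection is `le` (each is then a linear
extension of `le`). -/
def IsRealizer {α : Type*} (le : α → α → Prop) {t : ℕ} (L : Fin t → α → α → Prop) : Prop :=
  (∀ i, IsLinearOrder α (L i)) ∧ ∀ x y, le x y ↔ ∀ i, L i x y

/-- The order dimension of the poset given by `le`: the least positive size of a realizer. -/
noncomputable def dimRel {α : Type*} (le : α → α → Prop) : ℕ :=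
  sInf {t | 0 < t ∧ ∃ L : Fin t → α → α → Prop, IsRealizer le L}

/-- `x` lies strictly between `y` and `z` in the linear order (given as a `≤`-relation) `L`. -/
def StrictBtw {α : Type*} (L : α → α → Prop) (y x z : α) : Prop :=
  (L y x ∧ L x z ∧ x ≠ y ∧ x ≠ z) ∨ (L z x ∧ L x y ∧ x ≠ y ∧ x ≠ z)

/-- A family of linear orders witnessing the eye condition for `G`. -/
def IsEyeFamily {α : Type*} (G : SimpleGraph α) {s : ℕ} (L : Fin s → α → α → Prop) : Prop :=
  (∀ i, IsLinearOrder α (L i)) ∧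
  ∀ x y z : α, x ≠ y → x ≠ z → y ≠ z → G.Adj y z → ∃ i, ¬ StrictBtw (L i) y x z

/-- The eye parameter of a graph. -/
noncomputable def eye {α : Type*} (G : SimpleGraph α) : ℕ :=
  sInf {s | 0 < s ∧ ∃ L : Fin s → α → α → Prop, IsEyeFamily G L}

/-- Ground set of the incidence poset of `G`: vertices together with edges. -/
def IncGround {V : Type*} (G : SimpleGraph V) : Type _ := V ⊕ G.edgeSet

/-- The order of the incidence poset of `G`: vertices are minimal, edges are maximal,
and a vertex is below an edge exactly when it is one of its endpoints
(i.e. inclusion order, viewing edges as 2-element vertex sets). -/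
def incLE {V : Type*} (G : SimpleGraph V) : IncGround G → IncGround G → Prop
  | Sum.inl x, Sum.inl y => x = y
  | Sum.inl x, Sum.inr e => x ∈ (e : Sym2 V)
  | Sum.inr _, Sum.inl _ => False
  | Sum.inr e, Sum.inr f => e = f

/-- The dimension of the incidence poset of `G`. -/
noncomputable def incDim {V : Type*} (G : SimpleGraph V) : ℕ := dimRel (incLE G)

/-- A family of linear extensions of `le` such that whenever `z` covers both `x` and `y`,
some member puts `x` above `y`: an upper-cover realizer. -/
def IsUCRealizer {α : Type*} (le : α → α → Prop) {t : ℕ} (L : Fin t → α → α → Prop) : Prop :=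
  (∀ i, IsLinearOrder α (L i)) ∧ (∀ x y, le x y → ∀ i, L i x y) ∧
  ∀ z x y : α, CovRel le x z → CovRel le y z → x ≠ y → ∃ i, L i y x

/-- The upper cover dimension: least positive size of an upper-cover realizer. -/
noncomputable def dimUC {α : Type*} (le : α → α → Prop) : ℕ :=
  sInf {t | 0 < t ∧ ∃ L : Fin t → α → α → Prop, IsUCRealizer le L}

/-- The poset given by `le` has height exactly `r`. -/
def HeightEq {α : Type*} (le : α → α → Prop) (r : ℕ) : Prop :=
  (∃ c : Finset α, IsChain le (c : Set α) ∧ c.card = r) ∧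
  ∀ c : Finset α, IsChain le (c : Set α) → c.card ≤ r

open Function

noncomputable abbrev linearOrderOfIsLinearOrder {α : Type*} (r : α → α → Prop)
    [IsLinearOrder α r] : LinearOrder α where
  le := r
  le_refl := refl_of r
  le_trans _ _ _ := trans_of r
  le_antisymm _ _ := antisymm_of r
  le_total := total_of r
  toDecidableLE := Classical.decRel r

namespace Sym2
variable {α : Type*}

theorem le_sup_of_mem [SemilatticeSup α] {z : Sym2 α} {x : α} (h : x ∈ z) : x ≤ z.sup := by
  revert h
  induction z using Sym2.ind
  rw [Sym2.mem_iff]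
  rintro (rfl | rfl) <;> simp

theorem sup_lt_iff [LinearOrder α] {z : Sym2 α} {x : α} : z.sup < x ↔ ∀ y ∈ z, y < x := by
  induction z using Sym2.ind
  simp

end Sym2

section Key
variable {V : Type*} [LinearOrder V] (G : SimpleGraph V)

/-- Lexicographic sort key: an edge sits just above its larger endpoint, and edges sharing that
endpoint are ordered by their smaller one. -/
def incKey : IncGround G → V ×ₗ Bool ×ₗ V
  | .inl x => toLex (x, toLex (false, x))
  | .inr e => toLex ((e : Sym2 V).sup, toLex (true, (e : Sym2 V).inf))

variable {G}

lemma incKey_injective : Injective (incKey G) := by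
  rintro (x | e) (y | f) h <;> simp [incKey] at h
  · rw [h]
  · exact congrArg Sum.inr (Subtype.ext (Sym2.inf_eq_inf_and_sup_eq_sup.1 ⟨h.2, h.1⟩))

lemma incKey_mono {a b : IncGround G} (h : incLE G a b) : incKey G a ≤ incKey G b := by
  rcases a with x | e <;> rcases b with y | f <;> simp only [incLE] at h
  · rw [h]
  · simp only [incKey, Prod.Lex.toLex_le_toLex]
    rcases (Sym2.le_sup_of_mem h).lt_or_eq with hlt | heq
    · exact Or.inl hlt
    · exact Or.inr ⟨heq, Or.inl (by decide)⟩
  · rw [h]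

lemma incKey_inl_le_inl {x y : V} : incKey G (.inl x) ≤ incKey G (.inl y) ↔ x ≤ y :=
  StrictMono.le_iff_le (f := fun x => incKey G (.inl x))
    fun _ _ h => Prod.Lex.toLex_lt_toLex.2 (Or.inl h)

lemma incKey_inr_lt_inl {x : V} {e : G.edgeSet} (h : ∀ y ∈ (e : Sym2 V), y < x) :
    incKey G (.inr e) < incKey G (.inl x) :=
  Prod.Lex.toLex_lt_toLex.2 (Or.inl (Sym2.sup_lt_iff.2 h))

end Key

section Incidence
variable {V : Type*} {G : SimpleGraph V}

variable (G) in
theorem exists_linearExt_incLE (r : V → V → Prop) [IsLinearOrder V r] :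
    ∃ M : IncGround G → IncGround G → Prop, IsLinearOrder (IncGround G) M ∧
      (∀ a b, incLE G a b → M a b) ∧ (∀ x y, M (.inl x) (.inl y) → r x y) ∧
      ∀ x (e : G.edgeSet), (∀ y ∈ (e : Sym2 V), r y x ∧ y ≠ x) → ¬ M (.inl x) (.inr e) := by
  let _ := linearOrderOfIsLinearOrder r
  exact ⟨(· ≤ ·) on incKey G, incKey_injective.isLinearOrder_onFun _, fun _ _ => incKey_mono,
    fun _ _ => incKey_inl_le_inl.1,
    fun _ _ h => (incKey_inr_lt_inl fun y hy => lt_of_le_of_ne (h y hy).1 (h y hy).2).not_ge⟩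

theorem incLE_iff_forall_of_separates {ι : Type*} (N : ι → IncGround G → IncGround G → Prop)
    (hlin : ∀ i, IsLinearOrder (IncGround G) (N i)) (hext : ∀ i a b, incLE G a b → N i a b)
    (hvert : ∀ x y, (∀ i, N i (.inl x) (.inl y)) → x = y)
    (hsep : ∀ x (e : G.edgeSet), x ∉ (e : Sym2 V) → ∃ i, ¬ N i (.inl x) (.inr e))
    (a b : IncGround G) : incLE G a b ↔ ∀ i, N i a b := by
  have mem_of_forall : ∀ x e, (∀ i, N i (.inl x) (.inr e)) → x ∈ (e : Sym2 V) := by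
    intro x e h
    by_contra hx
    obtain ⟨i, hi⟩ := hsep x e hx
    exact hi (h i)
  have endpoint_le (i) {x} {e : G.edgeSet} (hx : x ∈ (e : Sym2 V)) (c : IncGround G)
      (h : N i (.inr e) c) : N i (.inl x) c :=
    have := hlin i; trans_of (N i) (hext i (.inl x) (.inr e) hx) h
  refine ⟨fun h i => hext i a b h, fun h => ?_⟩
  rcases a with x | ⟨⟨u, v⟩, huv⟩ <;> rcases b with y | f
  · exact hvert x y h
  · exact mem_of_forall x f h
  · have hu := hvert u y fun i => endpoint_le i (Sym2.mem_mk_left u v) _ (h i)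
    have hv := hvert v y fun i => endpoint_le i (Sym2.mem_mk_right u v) _ (h i)
    exact G.ne_of_adj huv (hu.trans hv.symm)
  · have hu := mem_of_forall u f fun i => endpoint_le i (Sym2.mem_mk_left u v) _ (h i)
    have hv := mem_of_forall v f fun i => endpoint_le i (Sym2.mem_mk_right u v) _ (h i)
    exact Subtype.ext ((Sym2.mem_and_mem_iff (G.ne_of_adj huv)).1 ⟨hu, hv⟩).symm

theorem forall_mem_or_forall_mem_of_not_strictBtw {r : V → V → Prop} [IsLinearOrder V r]
    {x y z : V} (hxy : x ≠ y) (hxz : x ≠ z) (h : ¬ StrictBtw r y x z) :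
    (∀ w ∈ s(y, z), r w x ∧ w ≠ x) ∨ (∀ w ∈ s(y, z), swap r w x ∧ w ≠ x) := by
  simp only [Sym2.mem_iff, forall_eq_or_imp, forall_eq, swap]
  rcases total_of r x y with hy | hy <;> rcases total_of r x z with hz | hz
  · exact Or.inr ⟨⟨hy, hxy.symm⟩, hz, hxz.symm⟩
  · exact absurd (Or.inr ⟨hz, hy, hxy, hxz⟩) h
  · exact absurd (Or.inl ⟨hy, hz, hxy, hxz⟩) h
  · exact Or.inl ⟨⟨hy, hxy.symm⟩, hz, hxz.symm⟩

theorem IsEyeFamily.exists_isRealizer_incLE {s : ℕ} {L : Fin s → V → V → Prop}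
    (hL : IsEyeFamily G L) (hs : 0 < s) :
    ∃ N : Fin (2 * s) → IncGround G → IncGround G → Prop, IsRealizer (incLE G) N := by
  obtain ⟨hlin, heye⟩ := hL
  choose M hMlin hMext hMvert hMsep using fun i =>
    have := hlin i; exists_linearExt_incLE G (L i)
  choose M' hM'lin hM'ext hM'vert hM'sep using fun i =>
    have := hlin i; exists_linearExt_incLE G (swap (L i))
  have hNlin : ∀ i, IsLinearOrder (IncGround G) (Sum.elim M M' i) := Sum.rec hMlin hM'lin
  have hiff := incLE_iff_forall_of_separates (Sum.elim M M') hNlin (Sum.rec hMext hM'ext)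
    ?vert ?sep
  case vert =>
    intro x y h
    have := hlin ⟨0, hs⟩
    exact antisymm_of (L ⟨0, hs⟩) (hMvert _ x y (h (.inl _))) (hM'vert _ x y (h (.inr _)))
  case sep =>
    rintro x ⟨⟨y, z⟩, hyz⟩ hx
    have hxy : x ≠ y := fun h => hx (h ▸ Sym2.mem_mk_left y z)
    have hxz : x ≠ z := fun h => hx (h ▸ Sym2.mem_mk_right y z)
    obtain ⟨i, hi⟩ := heye x y z hxy hxz (G.ne_of_adj hyz) hyz
    have := hlin i
    rcases forall_mem_or_forall_mem_of_not_strictBtw hxy hxz hi with h | h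
    exacts [⟨.inl i, hMsep i x _ h⟩, ⟨.inr i, hM'sep i x _ h⟩]
  let idx : Fin (2 * s) ≃ Fin s ⊕ Fin s := (finCongr (two_mul s)).trans finSumFinEquiv.symm
  exact ⟨fun k => Sum.elim M M' (idx k), fun k => hNlin (idx k), fun a b =>
    (hiff a b).trans idx.symm.forall_congr_left⟩

theorem IsRealizer.isEyeFamily_restrict {t : ℕ} {N : Fin t → IncGround G → IncGround G → Prop}
    (hN : IsRealizer (incLE G) N) : IsEyeFamily G fun i => N i on Sum.inl := by
  obtain ⟨hlin, hiff⟩ := hN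
  refine ⟨fun i => ?_, ?_⟩
  · have : IsLinearOrder (V ⊕ G.edgeSet) (N i) := hlin i
    exact Sum.inl_injective.isLinearOrder_onFun _
  intro x y z hxy hxz _ hyz
  let e : G.edgeSet := ⟨s(y, z), hyz⟩
  have hx : ¬ incLE G (.inl x) (.inr e) := by
    intro h
    rcases Sym2.mem_iff.1 h with rfl | rfl
    exacts [hxy rfl, hxz rfl]
  obtain ⟨i, hi⟩ : ∃ i, ¬ N i (.inl x) (.inr e) := not_forall.1 (hx ∘ (hiff _ _).2)
  have := hlin i
  have hex : N i (.inr e) (.inl x) := (total_of (N i) _ _).resolve_left hi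
  have hy := trans_of (N i) ((hiff (.inl y) (.inr e)).1 (Sym2.mem_mk_left y z) i) hex
  have hz := trans_of (N i) ((hiff (.inl z) (.inr e)).1 (Sym2.mem_mk_right y z) i) hex
  refine ⟨i, ?_⟩
  rintro (⟨-, hxz', -, -⟩ | ⟨-, hxy', -, -⟩)
  · exact hxz (Sum.inl_injective (antisymm_of (N i) hxz' hz))
  · exact hxy (Sum.inl_injective (antisymm_of (N i) hxy' hy))

end Incidence

theorem sInf_le_sInf_and_sInf_le_two_mul_sInf {S T : Set ℕ} (hTS : T ⊆ S)
    (hST : ∀ s ∈ S, 2 * s ∈ T) : sInf S ≤ sInf T ∧ sInf T ≤ 2 * sInf S := by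
  rcases S.eq_empty_or_nonempty with rfl | hS
  · simp [Set.subset_empty_iff.1 hTS]
  · have hmem := hST _ (Nat.sInf_mem hS)
    exact ⟨Nat.sInf_le (hTS (Nat.sInf_mem ⟨_, hmem⟩)), Nat.sInf_le hmem⟩

theorem stmt_1_general {V : Type*} (G : SimpleGraph V) :
    eye G ≤ incDim G ∧ incDim G ≤ 2 * eye G :=
  sInf_le_sInf_and_sInf_le_two_mul_sInf (fun _ ⟨ht, _, hN⟩ => ⟨ht, _, hN.isEyeFamily_restrict⟩)
    fun _ ⟨hs, _, hL⟩ => ⟨by omega, hL.exists_isRealizer_incLE hs⟩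

/-- For every graph `G`, `eye(G) ≤ dim(P_G) ≤ 2 · eye(G)`. -/
theorem stmt_1 {V : Type*} [Fintype V] (G : SimpleGraph V) :
    eye G ≤ incDim G ∧ incDim G ≤ 2 * eye G :=
  stmt_1_general G
end

section
/- Let n ≥ 5 be odd and let G be the cycle on vertices a_1,...,a_n (with edges {a_i, a_{i+1}} for 1 ≤ i ≤ n−1 and edge {a_n, a_1}). Then eye(G) ≤ 2. -/
open SimpleGraph

/-
An edge `{y, z}` is harmless in any linear order in which `y` and `z` are neighbours. In the
natural order of `Fin n` every edge `{i, i + 1}` of the cycle has this property except the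
closing edge `{n - 1, 0}`, and that one becomes the cover `0 ⋖ 1` after rotating by one step.
So the natural order and its rotation form an eye family of size two.
-/

variable {α β : Type*}

theorem strictBtw_comm {L : α → α → Prop} {x y z : α} :
    StrictBtw L y x z ↔ StrictBtw L z x y := by
  unfold StrictBtw
  tauto

theorem not_strictBtw_preimage_of_covBy [PartialOrder β] (f : α ↪ β) {x y z : α}
    (h : f y ⋖ f z) : ¬ StrictBtw (f ⁻¹'o (· ≤ ·)) y x z := by
  rintro (⟨hyx, hxz, hx_ne_y, hx_ne_z⟩ | ⟨hzx, hxy, -, -⟩)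
  · exact h.2 (lt_of_le_of_ne hyx (f.injective.ne hx_ne_y).symm)
      (lt_of_le_of_ne hxz (f.injective.ne hx_ne_z))
  · exact (h.1.trans_le (hzx.trans hxy)).false

theorem eye_le_of_forall_adj_covBy [LinearOrder β] {G : SimpleGraph α} {s : ℕ} (hs : 0 < s)
    (f : Fin s → α ↪ β) (hG : ∀ y z, G.Adj y z → ∃ i, f i y ⋖ f i z ∨ f i z ⋖ f i y) :
    eye G ≤ s := by
  refine Nat.sInf_le ⟨hs, fun i => f i ⁻¹'o (· ≤ ·),
    fun i => (RelEmbedding.preimage (f i) (· ≤ ·)).isLinearOrder, ?_⟩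
  intro x y z _ _ _ hyz
  obtain ⟨i, hcov | hcov⟩ := hG y z hyz
  · exact ⟨i, not_strictBtw_preimage_of_covBy (f i) hcov⟩
  · exact ⟨i, strictBtw_comm.not.2 (not_strictBtw_preimage_of_covBy (f i) hcov)⟩

theorem Fin.covBy_of_val_add_one_eq {n : ℕ} {a b : Fin n} (h : a.val + 1 = b.val) : a ⋖ b :=
  ⟨Fin.lt_def.2 (by omega), fun c hac hcb => by
    rw [Fin.lt_def] at hac hcb
    omega⟩

theorem Fin.covBy_add_one_or_finRotate_covBy {n : ℕ} (a : Fin (n + 2)) :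
    a ⋖ a + 1 ∨ finRotate _ a ⋖ finRotate _ (a + 1) := by
  by_cases ha : a = Fin.last _
  · right
    subst ha
    rw [finRotate_last, Fin.last_add_one, finRotate_apply, zero_add]
    exact Fin.covBy_of_val_add_one_eq (by simp)
  · left
    exact Fin.covBy_of_val_add_one_eq (Fin.val_add_one_of_lt (Fin.lt_last_iff_ne_last.2 ha)).symm

theorem stmt_7_general (n : ℕ) :
    eye (SimpleGraph.cycleGraph n) ≤ 2 := by
  refine eye_le_of_forall_adj_covBy two_pos
    ![Function.Embedding.refl _, (finRotate n).toEmbedding] ?_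
  intro y z hyz
  match n, y, z, hyz with
  | 1, y, z, hyz => exact absurd hyz SimpleGraph.cycleGraph_one_adj
  | n + 2, y, z, hyz =>
    rw [SimpleGraph.cycleGraph_adj, sub_eq_iff_eq_add', sub_eq_iff_eq_add'] at hyz
    rcases hyz with rfl | rfl
    · rcases Fin.covBy_add_one_or_finRotate_covBy z with h | h
      · exact ⟨0, Or.inr h⟩
      · exact ⟨1, Or.inr h⟩
    · rcases Fin.covBy_add_one_or_finRotate_covBy y with h | h
      · exact ⟨0, Or.inl h⟩
      · exact ⟨1, Or.inl h⟩

/-- An odd cycle on `n ≥ 5` vertices has eye parameter at most `2`. -/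
theorem stmt_7 (n : ℕ) (h5 : 5 ≤ n) (hodd : Odd n) :
    eye (SimpleGraph.cycleGraph n) ≤ 2 :=
  stmt_7_general n
end

section
/- Let P_r denote the incidence poset of the complete graph K_r. Then dim(P_r) ≥ lg lg r, where lg denotes the base-2 logarithm. -/
open SimpleGraph

/-!
Restricted to the vertices, a realizer of size `t + 1` is a family of `t + 1` linear orders of
the `r` vertices. Applying Erdős–Szekeres `t` times (each pass takes a square root of the set
size) leaves three vertices on which every order agrees with or reverses the first one, so the
middle vertex `b` lies between the other two, `a` and `c`, in every order. But `b` is not below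
the edge `ac`, so some order puts that edge, and with it `a` and `c`, below `b`. Hence
`r < 3 ^ 2 ^ t ≤ 2 ^ 2 ^ (t + 1)`.
-/

open Finset

section ErdosSzekeres

variable {α : Type*} {Q : α → α → Prop} {S : Finset α} {x y : α}

open scoped Classical in
noncomputable def chainHeight (Q : α → α → Prop) (S : Finset α) (x : α) : ℕ :=
  (S.powerset.filter fun c : Finset α => IsChain Q (c : Set α) ∧ ∀ a ∈ c, Q a x).sup card

lemma le_chainHeight {c : Finset α} (hcS : c ⊆ S) (hc : IsChain Q (c : Set α))
    (hcx : ∀ a ∈ c, Q a x) : #c ≤ chainHeight Q S x := by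
  classical
  exact le_sup (f := card) (by simpa [hcS] using And.intro hc hcx)

lemma exists_card_eq_chainHeight (Q : α → α → Prop) (S : Finset α) (x : α) :
    ∃ c ⊆ S, IsChain Q (c : Set α) ∧ (∀ a ∈ c, Q a x) ∧ #c = chainHeight Q S x := by
  classical
  obtain ⟨c, hc, hsup⟩ := exists_mem_eq_sup
    (S.powerset.filter fun c : Finset α => IsChain Q (c : Set α) ∧ ∀ a ∈ c, Q a x)
    ⟨∅, by simp⟩ card
  simp only [mem_filter, mem_powerset] at hc
  exact ⟨c, hc.1, hc.2.1, hc.2.2, hsup.symm⟩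

lemma chainHeight_lt_chainHeight [IsPartialOrder α Q] (hy : y ∈ S) (hxy : Q x y) (hne : x ≠ y) :
    chainHeight Q S x < chainHeight Q S y := by
  classical
  obtain ⟨c, hcS, hc, hcx, hcard⟩ := exists_card_eq_chainHeight Q S x
  have hyc : y ∉ c := fun hyc => hne (antisymm hxy (hcx y hyc))
  have hbelow : ∀ a ∈ insert y c, Q a y := by
    simp only [mem_insert, forall_eq_or_imp]
    exact ⟨refl y, fun a ha => _root_.trans (hcx a ha) hxy⟩
  have hchain : IsChain Q (insert y c : Set α) :=
    hc.insert fun a ha _ => Or.inr (hbelow a (mem_insert_of_mem ha))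
  have := le_chainHeight (insert_subset hy hcS) (by simpa using hchain) hbelow
  rw [card_insert_of_notMem hyc] at this
  omega

theorem exists_isChain_or_isAntichain [IsPartialOrder α Q] (S : Finset α) {m : ℕ}
    (hS : m ^ 2 ≤ #S) :
    ∃ T ⊆ S, #T = m ∧ (IsChain Q (T : Set α) ∨ IsAntichain Q (T : Set α)) := by
  classical
  by_cases hlong : ∃ c ⊆ S, IsChain Q (c : Set α) ∧ m ≤ #c
  · obtain ⟨c, hcS, hc, hmc⟩ := hlong
    obtain ⟨T, hTc, hT⟩ := exists_subset_card_eq hmc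
    exact ⟨T, hTc.trans hcS, hT, Or.inl (hc.mono (by simpa using hTc))⟩
  push Not at hlong
  -- Otherwise `chainHeight` takes fewer than `m` values on `S`, and its level sets are antichains.
  have hm : 0 < m := by simpa using hlong ∅ (empty_subset S) (by simp)
  have hmaps : ∀ x ∈ S, chainHeight Q S x ∈ range m := fun x _ => by
    obtain ⟨c, hcS, hc, -, hcard⟩ := exists_card_eq_chainHeight Q S x
    simpa [← hcard] using hlong c hcS hc
  obtain ⟨h, -, hfiber⟩ := exists_le_card_fiber_of_mul_le_card_of_maps_to hmaps
    (nonempty_range_iff.2 hm.ne') (by simpa [sq] using hS)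
  obtain ⟨T, hTS, hT⟩ := exists_subset_card_eq hfiber
  refine ⟨T, hTS.trans (filter_subset _ _), hT, Or.inr fun x hx y hy hne hxy => ?_⟩
  have hx' := mem_filter.1 (hTS hx)
  have hy' := mem_filter.1 (hTS hy)
  exact (chainHeight_lt_chainHeight hy'.1 hxy hne).ne (hx'.2.trans hy'.2.symm)

end ErdosSzekeres

section TwoOrders

variable {α : Type*}

theorem exists_subset_agree_or_reverse (M N : α → α → Prop) [IsLinearOrder α M]
    [IsLinearOrder α N] (S : Finset α) {m : ℕ} (hS : m ^ 2 ≤ #S) :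
    ∃ T ⊆ S, #T = m ∧
      ((∀ a ∈ T, ∀ b ∈ T, M a b → N a b) ∨ ∀ a ∈ T, ∀ b ∈ T, M a b → N b a) := by
  let _ : IsPartialOrder α (fun a b => M a b ∧ N a b) :=
    { refl := fun a => ⟨refl a, refl a⟩
      trans := fun _ _ _ h h' => ⟨_root_.trans h.1 h'.1, _root_.trans h.2 h'.2⟩
      antisymm := fun _ _ h h' => antisymm h.1 h'.1 }
  obtain ⟨T, hTS, hT, hchain | hanti⟩ := exists_isChain_or_isAntichain S hS
    (Q := fun a b => M a b ∧ N a b)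
  · refine ⟨T, hTS, hT, Or.inl fun a ha b hb hab => ?_⟩
    obtain rfl | hne := eq_or_ne a b
    · exact refl a
    · exact (hchain ha hb hne).resolve_right (fun h => hne (antisymm hab h.1)) |>.2
  · refine ⟨T, hTS, hT, Or.inr fun a ha b hb hab => ?_⟩
    obtain rfl | hne := eq_or_ne a b
    · exact refl a
    · exact (total_of N a b).resolve_left fun h => hanti ha hb hne ⟨hab, h⟩

theorem exists_subset_forall_agree_or_reverse {t k : ℕ} (M : Fin (t + 1) → α → α → Prop)
    [∀ i, IsLinearOrder α (M i)] (S : Finset α) (hS : k ^ 2 ^ t ≤ #S) :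
    ∃ T ⊆ S, #T = k ∧ ∀ i,
      (∀ a ∈ T, ∀ b ∈ T, M 0 a b → M i a b) ∨ ∀ a ∈ T, ∀ b ∈ T, M 0 a b → M i b a := by
  induction t generalizing S with
  | zero =>
    obtain ⟨T, hTS, hT⟩ := exists_subset_card_eq (by simpa using hS)
    exact ⟨T, hTS, hT, fun i => Or.inl fun a _ b _ h => Fin.fin_one_eq_zero i ▸ h⟩
  | succ t ih =>
    obtain ⟨T', hT'S, hT', hlast⟩ := exists_subset_agree_or_reverse (M 0) (M (Fin.last _)) S
      (m := k ^ 2 ^ t) (by rwa [← pow_mul, ← pow_succ])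
    obtain ⟨T, hTT', hT, hcast⟩ := ih (fun j => M j.castSucc) T' hT'.ge
    refine ⟨T, hTT'.trans hT'S, hT, Fin.lastCases ?_ fun j => by simpa using hcast j⟩
    exact hlast.imp (fun h a ha b hb => h a (hTT' ha) b (hTT' hb))
      (fun h a ha b hb => h a (hTT' ha) b (hTT' hb))

theorem exists_rel_rel_of_card_eq_three (M : α → α → Prop) [IsLinearOrder α M] {T : Finset α}
    (hT : #T = 3) : ∃ a ∈ T, ∃ b ∈ T, ∃ c ∈ T, a ≠ b ∧ b ≠ c ∧ a ≠ c ∧ M a b ∧ M b c := by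
  classical
  obtain ⟨x, y, z, hxy, hxz, hyz, rfl⟩ := card_eq_three.1 hT
  simp only [mem_insert, mem_singleton, exists_eq_or_imp, exists_eq_left]
  rcases total_of M x y with h1 | h1 <;> rcases total_of M y z with h2 | h2 <;>
    rcases total_of M x z with h3 | h3 <;> grind

end TwoOrders

section Realizer

variable {α : Type*}

theorem exists_linearExtension_not_rel (le : α → α → Prop) [IsPartialOrder α le] {x y : α}
    (h : ¬ le x y) : ∃ s : α → α → Prop, IsLinearOrder α s ∧ le ≤ s ∧ ¬ s x y := by
  -- `le` with `y ≤ x` adjoined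
  let le' : α → α → Prop := fun a b => le a b ∨ (le a y ∧ le x b)
  have : IsPartialOrder α le' :=
    { refl := fun a => Or.inl (refl a)
      trans := by
        rintro a b c (hab | ⟨hay, hxb⟩) (hbc | ⟨hby, hxc⟩)
        · exact Or.inl (_root_.trans hab hbc)
        · exact Or.inr ⟨_root_.trans hab hby, hxc⟩
        · exact Or.inr ⟨hay, _root_.trans hxb hbc⟩
        · exact Or.inr ⟨hay, hxc⟩
      antisymm := by
        rintro a b (hab | ⟨hay, hxb⟩) (hba | ⟨hby, hxa⟩)
        · exact antisymm hab hba
        · exact (h (_root_.trans hxa (_root_.trans hab hby))).elim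
        · exact (h (_root_.trans hxb (_root_.trans hba hay))).elim
        · exact (h (_root_.trans hxa hay)).elim }
  obtain ⟨s, hs, hle⟩ := extend_partialOrder le'
  have hxy : x ≠ y := by rintro rfl; exact h (refl x)
  exact ⟨s, hs, fun a b hab => hle a b (Or.inl hab),
    fun hsxy => hxy (hs.antisymm _ _ hsxy (hle y x (Or.inr ⟨refl y, refl x⟩)))⟩

theorem exists_isRealizer [Finite α] (le : α → α → Prop) [IsPartialOrder α le] :
    ∃ t, 0 < t ∧ ∃ L : Fin t → α → α → Prop, IsRealizer le L := by
  obtain ⟨s₀, hs₀, hle₀⟩ := extend_partialOrder le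
  have key : ∀ p : α × α, ∃ s : α → α → Prop,
      IsLinearOrder α s ∧ le ≤ s ∧ (s p.1 p.2 → le p.1 p.2) := fun p => by
    by_cases h : le p.1 p.2
    · exact ⟨s₀, hs₀, hle₀, fun _ => h⟩
    · obtain ⟨s, hs, hle, hn⟩ := exists_linearExtension_not_rel le h
      exact ⟨s, hs, hle, fun h' => (hn h').elim⟩
  choose F hFlin hFle hFrel using key
  -- the extra index `none` keeps the family nonempty when `α` is empty
  obtain ⟨t, ⟨e⟩⟩ := Finite.exists_equiv_fin (Option (α × α))
  have hlin : ∀ o : Option (α × α), IsLinearOrder α (o.elim s₀ F) := by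
    rintro (_ | p)
    exacts [hs₀, hFlin p]
  have hext : ∀ o : Option (α × α), le ≤ o.elim s₀ F := by
    rintro (_ | p)
    exacts [hle₀, hFle p]
  refine ⟨t, (e none).pos, fun i => (e.symm i).elim s₀ F, fun i => hlin _,
    fun x y => ⟨fun h i => hext _ x y h, fun h => ?_⟩⟩
  simpa using hFrel (x, y) (by simpa using h (e (some (x, y))))

theorem dimRel_mem [Finite α] (le : α → α → Prop) [IsPartialOrder α le] :
    0 < dimRel le ∧ ∃ L : Fin (dimRel le) → α → α → Prop, IsRealizer le L :=
  Nat.sInf_mem (exists_isRealizer le)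

end Realizer

section Incidence

variable {V : Type*} {G : SimpleGraph V}

instance : IsPartialOrder (IncGround G) (incLE G) where
  refl := by rintro (x | e) <;> rfl
  trans := by
    rintro (x | e) (y | f) (z | g) h₁ h₂ <;> simp only [incLE] at h₁ h₂ ⊢ <;> subst_vars <;>
      first | rfl | assumption
  antisymm := by
    rintro (x | e) (y | f) h₁ h₂ <;> simp only [incLE] at h₁ h₂ <;> (subst_vars; rfl)

instance [Finite V] : Finite (IncGround G) := inferInstanceAs (Finite (V ⊕ G.edgeSet))

theorem IsRealizer.card_lt_of_isClique {t : ℕ}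
    {L : Fin (t + 1) → IncGround G → IncGround G → Prop} (hL : IsRealizer (incLE G) L)
    {S : Finset V} (hS : G.IsClique (S : Set V)) : #S < 3 ^ 2 ^ t := by
  by_contra! hS3
  let M : Fin (t + 1) → V → V → Prop := fun i => Sum.inl ⁻¹'o L i
  have hM (i : Fin (t + 1)) : IsLinearOrder V (M i) :=
    have := hL.1 i
    (RelEmbedding.preimage (⟨Sum.inl, Sum.inl_injective⟩ : V ↪ IncGround G) (L i)).isLinearOrder
  obtain ⟨T, hTS, hT, hagree⟩ := exists_subset_forall_agree_or_reverse M S hS3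
  obtain ⟨a, ha, b, hb, c, hc, hab, hbc, hac, h₁, h₂⟩ :=
    exists_rel_rel_of_card_eq_three (M 0) hT
  let e : G.edgeSet := ⟨s(a, c), hS (hTS ha) (hTS hc) hac⟩
  have hb_e : ¬ incLE G (.inl b) (.inr e) := by simp [incLE, e, hab.symm, hbc]
  obtain ⟨i, hi⟩ := not_forall.1 (mt (hL.2 _ _).2 hb_e)
  have hLi := hL.1 i
  have he_b : L i (.inr e) (.inl b) := (total_of (L i) _ _).resolve_left hi
  have ha_b : M i a b :=
    hLi.trans _ _ _ ((hL.2 (.inl a) (.inr e)).1 (Sym2.mem_mk_left a c) i) he_b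
  have hc_b : M i c b :=
    hLi.trans _ _ _ ((hL.2 (.inl c) (.inr e)).1 (Sym2.mem_mk_right a c) i) he_b
  rcases hagree i with h | h
  · exact hbc (antisymm (h b hb c hc h₂) hc_b)
  · exact hab (antisymm ha_b (h a ha b hb h₁))

end Incidence

theorem logb_logb_le_of_le_two_pow_two_pow {r d : ℕ} (h : r ≤ 2 ^ 2 ^ d) :
    Real.logb 2 (Real.logb 2 r) ≤ d := by
  rcases Nat.lt_or_ge r 2 with hr | hr
  · interval_cases r <;> simp
  have hlog_pos : 0 < Real.logb 2 r := Real.logb_pos one_lt_two (by exact_mod_cast hr)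
  have hlog_le : Real.logb 2 r ≤ (2 : ℝ) ^ d := by
    rw [Real.logb_le_iff_le_rpow one_lt_two (by positivity), ← Nat.cast_ofNat,
      ← Nat.cast_pow, Real.rpow_natCast]
    exact_mod_cast h
  calc Real.logb 2 (Real.logb 2 r) ≤ Real.logb 2 ((2 : ℝ) ^ d) :=
        Real.logb_le_logb_of_le one_lt_two hlog_pos hlog_le
    _ = d := by rw [Real.logb_pow, Real.logb_self_eq_one one_lt_two, mul_one]

/-- The dimension of the incidence poset of the complete graph `K_r` is at least `lg lg r`. -/
theorem stmt_11 (r : ℕ) :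
    Real.logb 2 (Real.logb 2 r) ≤ (incDim (⊤ : SimpleGraph (Fin r)) : ℝ) := by
  obtain ⟨hpos, L, hL⟩ := dimRel_mem (incLE (⊤ : SimpleGraph (Fin r)))
  refine logb_logb_le_of_le_two_pow_two_pow ?_
  unfold incDim
  generalize dimRel (incLE (⊤ : SimpleGraph (Fin r))) = d at hpos L hL ⊢
  obtain ⟨t, rfl⟩ := Nat.exists_eq_add_one.2 hpos
  calc r = #(univ : Finset (Fin r)) := (card_fin r).symm
    _ ≤ 3 ^ 2 ^ t := (hL.card_lt_of_isClique (by simp)).le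
    _ ≤ 4 ^ 2 ^ t := Nat.pow_le_pow_left (by norm_num) _
    _ = 2 ^ 2 ^ (t + 1) := by rw [pow_succ, pow_mul']; norm_num
end

section
/- Let S_n be the shift graph whose vertices are the 2-element subsets {i,j} of {1,...,n} with i < j, and with {i,j} adjacent to {j,k} whenever 1 ≤ i < j < k ≤ n. Then χ(S_n) = ⌈lg n⌉, where lg is the base-2 logarithm. -/
open SimpleGraph

/-- Vertices of the shift graph: pairs `{i,j} ⊆ {1,…,n}` with `i < j`. -/
def ShiftVert (n : ℕ) := {p : Fin n × Fin n // p.1 < p.2}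

/-- The shift graph `S_n`: `{i,j}` is adjacent to `{j,k}` whenever `i < j < k`. -/
def shiftGraph (n : ℕ) : SimpleGraph (ShiftVert n) where
  Adj a b := a.1.2 = b.1.1 ∨ b.1.2 = a.1.1
  symm := ⟨by intro a b h; tauto⟩
  loopless := ⟨by
    intro a h
    rcases h with h | h <;> exact absurd (h ▸ a.2) (lt_irrefl _)⟩

/-! A pair `i < j` is coloured by the most significant bit `p` in which `i` and `j` differ;
necessarily `j` has a `1` and `i` a `0` there. For adjacent pairs `{i,j}`, `{j,k}` of the same
colour, `j` would carry both a `1` and a `0` at position `p`. Conversely, in a proper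
`m`-colouring the set of colours of the pairs `{i,j}`, `i < j`, determines `j`: for `j < k` the
colour of `{j,k}` occurs at `k` but not at `j`. Hence `n ≤ 2 ^ m`. -/

namespace Nat

lemma testBit_log2_xor_of_lt {i j : ℕ} (hij : i < j) :
    i.testBit (i ^^^ j).log2 = false ∧ j.testBit (i ^^^ j).log2 = true := by
  set p := (i ^^^ j).log2
  have hne : i ^^^ j ≠ 0 := by simpa using hij.ne
  have hdiff : i.testBit p ≠ j.testBit p := by
    simpa using Nat.testBit_log2 hne
  have hagree : ∀ q, p < q → i.testBit q = j.testBit q := fun q hq => by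
    have := Nat.testBit_lt_two_pow (Nat.lt_log2_self.trans_le (Nat.pow_le_pow_right two_pos hq))
    simpa using this
  cases hi : i.testBit p <;> cases hj : j.testBit p
  · simp [hi, hj] at hdiff
  · exact ⟨rfl, rfl⟩
  · exact absurd (Nat.lt_of_testBit p hj hi fun q hq => (hagree q hq).symm) hij.not_gt
  · simp [hi, hj] at hdiff

end Nat

variable {n : ℕ}

def shiftColor (v : ShiftVert n) : ℕ := (v.1.1.val ^^^ v.1.2.val).log2

lemma shiftColor_lt_clog (v : ShiftVert n) : shiftColor v < Nat.clog 2 n := by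
  have hn : n ≤ 2 ^ Nat.clog 2 n := Nat.le_pow_clog one_lt_two n
  have hne : v.1.1.val ^^^ v.1.2.val ≠ 0 := by simpa using (Fin.lt_def.1 v.2).ne
  exact (Nat.log2_lt hne).2 <|
    Nat.xor_lt_two_pow (v.1.1.isLt.trans_le hn) (v.1.2.isLt.trans_le hn)

lemma shiftColor_ne_of_snd_eq_fst {a b : ShiftVert n} (h : a.1.2 = b.1.1) :
    shiftColor a ≠ shiftColor b := by
  intro heq
  have ha := (Nat.testBit_log2_xor_of_lt (Fin.lt_def.1 a.2)).2
  have hb := (Nat.testBit_log2_xor_of_lt (Fin.lt_def.1 b.2)).1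
  rw [← shiftColor, heq, h] at ha
  rw [← shiftColor] at hb
  simp [ha] at hb

def shiftColoring (n : ℕ) : (shiftGraph n).Coloring (Fin (Nat.clog 2 n)) :=
  Coloring.mk (fun v => ⟨shiftColor v, shiftColor_lt_clog v⟩) fun {a b} hadj heq => by
    rcases hadj with h | h
    · exact shiftColor_ne_of_snd_eq_fst h (Fin.val_eq_of_eq heq)
    · exact shiftColor_ne_of_snd_eq_fst h (Fin.val_eq_of_eq heq).symm

lemma le_two_pow_of_colorable {m : ℕ} (hc : (shiftGraph n).Colorable m) : n ≤ 2 ^ m := by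
  obtain ⟨C⟩ := hc
  let colorsBelow (j : Fin n) : Set (Fin m) := {c | ∃ i, ∃ h : i < j, C ⟨(i, j), h⟩ = c}
  have hinj : Function.Injective colorsBelow := .of_lt_imp_ne fun j k hjk heq => by
    obtain ⟨i, hij, hcol⟩ : C ⟨(j, k), hjk⟩ ∈ colorsBelow j := heq ▸ ⟨j, hjk, rfl⟩
    exact C.valid (Or.inl rfl : (shiftGraph n).Adj ⟨(i, j), hij⟩ ⟨(j, k), hjk⟩) hcol
  simpa using Fintype.card_le_of_injective colorsBelow hinj

lemma chromaticNumber_shiftGraph : (shiftGraph n).chromaticNumber = Nat.clog 2 n :=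
  le_antisymm (Colorable.chromaticNumber_le ⟨shiftColoring n⟩) <|
    le_chromaticNumber_iff_colorable.2 fun _ hc =>
      Nat.cast_le.2 (Nat.clog_le_of_le_pow (le_two_pow_of_colorable hc))

/-- The chromatic number of the shift graph `S_n` is `⌈lg n⌉`. -/
theorem stmt_12 (n : ℕ) :
    (shiftGraph n).chromaticNumber = ((⌈Real.logb 2 n⌉₊ : ℕ) : ℕ∞) := by
  rw [chromaticNumber_shiftGraph]
  exact_mod_cast (Real.natCeil_logb_natCast 2 n).symm
end

section
/- Let P and P' be finite posets whose order diagrams D and D' (acyclic orientations of their cover graphs, with each covering pair x < y oriented from x to y) satisfy: D' is a subdiagram of D, i.e., the elements of P' are a subset of those of P and every covering edge of P' is a covering edge of P. Then dim_uc(P') ≤ dim_uc(P), where dim_uc denotes upper cover dimension. -/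
open SimpleGraph

/-!
Restricting the linear extensions of an upper-cover realizer of `P` to the elements of `P'`
gives one of `P'`. They extend `P'` because its order is generated by its covers, each of which
is a cover of `P`; and two elements covered by a common element of `P'` are covered by it
in `P` as well, so some restricted extension still reverses them.
-/

open Function Relation

theorem covRel_iff_covBy {β : Type*} [PartialOrder β] {x y : β} :
    CovRel (· ≤ ·) x y ↔ x ⋖ y := by
  refine ⟨fun ⟨hle, hne, hbtw⟩ => ⟨hle.lt_of_ne hne, fun z hxz hzy => ?_⟩, fun h => ?_⟩
  · rcases hbtw z hxz.le hzy.le with rfl | rfl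
    exacts [hxz.ne rfl, hzy.ne rfl]
  · refine ⟨h.le, h.ne, fun z hxz hzy => ?_⟩
    by_contra! hz
    exact h.2 (hxz.lt_of_ne hz.1.symm) (hzy.lt_of_ne hz.2)

theorem le_of_forall_covRel_le {β γ : Type*} [Finite β] [Preorder γ] {r : β → β → Prop}
    [IsPartialOrder β r] {f : β → γ} (hf : ∀ x y, CovRel r x y → f x ≤ f y) {x y : β}
    (hxy : r x y) : f x ≤ f y := by
  let : PartialOrder β :=
    { le := r
      le_refl := refl_of r
      le_trans := fun _ _ _ => trans_of r
      le_antisymm := fun _ _ => antisymm_of r }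
  let : Fintype β := Fintype.ofFinite β
  classical
  let : LocallyFiniteOrder β := Fintype.toLocallyFiniteOrder
  exact (monotone_iff_forall_covBy f).2 (fun a b hab => hf a b (covRel_iff_covBy.2 hab)) hxy

theorem IsUCRealizer.comap {α β : Type*} {le : α → α → Prop} {le' : β → β → Prop} {f : β → α}
    (hf : Injective f) (hle : ∀ x y, le' x y → le (f x) (f y))
    (hcov : ∀ x y, CovRel le' x y → CovRel le (f x) (f y)) {t : ℕ} {L : Fin t → α → α → Prop}
    (hL : IsUCRealizer le L) : IsUCRealizer le' fun i => L i on f := by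
  obtain ⟨hlin, hext, hrev⟩ := hL
  refine ⟨fun i => ?_, fun x y hxy i => hext _ _ (hle x y hxy) i, fun z x y hx hy hxy => ?_⟩
  · have := hlin i
    exact hf.isLinearOrder_onFun (L i)
  · exact hrev (f z) (f x) (f y) (hcov x z hx) (hcov y z hy) (hf.ne hxy)

theorem exists_linearExtension_of_not_le {α : Type*} [PartialOrder α] {x y : α}
    (hxy : ¬ x ≤ y) :
    ∃ L : α → α → Prop, IsLinearOrder α L ∧ (∀ a b : α, a ≤ b → L a b) ∧ L y x := by
  -- `≤` with the pair `y < x` added, closed transitively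
  let q : α → α → Prop := fun u v => u ≤ v ∨ (u ≤ y ∧ x ≤ v)
  have : IsPartialOrder α q :=
    { refl := fun a => Or.inl le_rfl
      trans := by
        rintro a b c (hab | ⟨hay, hxb⟩) (hbc | ⟨hby, hxc⟩)
        · exact Or.inl (hab.trans hbc)
        · exact Or.inr ⟨hab.trans hby, hxc⟩
        · exact Or.inr ⟨hay, hxb.trans hbc⟩
        · exact Or.inr ⟨hay, hxc⟩
      antisymm := by
        rintro a b (hab | ⟨hay, hxb⟩) (hba | ⟨hby, hxa⟩)
        · exact le_antisymm hab hba
        · exact absurd ((hxa.trans hab).trans hby) hxy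
        · exact absurd ((hxb.trans hba).trans hay) hxy
        · exact absurd (hxb.trans hby) hxy }
  obtain ⟨L, hL, hqL⟩ := extend_partialOrder q
  exact ⟨L, hL, fun a b hab => hqL _ _ (Or.inl hab), hqL _ _ (Or.inr ⟨le_rfl, le_rfl⟩)⟩

theorem CovBy.not_le_of_covBy {α : Type*} [PartialOrder α] {x y z : α} (hx : x ⋖ z)
    (hy : y ⋖ z) (hxy : x ≠ y) : ¬ x ≤ y :=
  fun hle => hx.2 (hle.lt_of_ne hxy) hy.lt

theorem exists_isUCRealizer (α : Type*) [Fintype α] [PartialOrder α] :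
    ∃ t, 0 < t ∧ ∃ L : Fin t → α → α → Prop, IsUCRealizer ((· ≤ ·) : α → α → Prop) L := by
  classical
  obtain ⟨L₀, hL₀, hextL₀⟩ := extend_partialOrder ((· ≤ ·) : α → α → Prop)
  -- one linear extension reversing each incomparable pair, and `L₀` for the other pairs
  have hpair : ∀ p : α × α, ∃ L : α → α → Prop,
      IsLinearOrder α L ∧ (∀ a b : α, a ≤ b → L a b) ∧ (¬ p.1 ≤ p.2 → L p.2 p.1) := by
    intro p
    by_cases hp : p.1 ≤ p.2
    · exact ⟨L₀, hL₀, hextL₀, fun h => absurd hp h⟩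
    · obtain ⟨L, hL, hext, hrev⟩ := exists_linearExtension_of_not_le hp
      exact ⟨L, hL, hext, fun _ => hrev⟩
  choose F hFlin hFext hFrev using hpair
  let e := Fintype.equivFin (α × α)
  refine ⟨Fintype.card (α × α) + 1, Nat.succ_pos _, Fin.cons L₀ (fun j => F (e.symm j)),
    Fin.cases hL₀ (fun _ => hFlin _), fun a b hab => Fin.cases (hextL₀ a b hab)
      (fun _ => hFext _ a b hab), fun z x y hx hy hxy => ⟨(e (x, y)).succ, ?_⟩⟩
  rw [covRel_iff_covBy] at hx hy
  simpa only [Fin.cons_succ, Equiv.symm_apply_apply] using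
    hFrev (x, y) (hx.not_le_of_covBy hy hxy)

theorem dimUC_le_dimUC {α β : Type*} {le : α → α → Prop} {le' : β → β → Prop}
    (hex : ∃ t, 0 < t ∧ ∃ L : Fin t → α → α → Prop, IsUCRealizer le L)
    (hmap : ∀ t (L : Fin t → α → α → Prop), IsUCRealizer le L →
      ∃ L' : Fin t → β → β → Prop, IsUCRealizer le' L') :
    dimUC le' ≤ dimUC le := by
  obtain ⟨hpos, L, hL⟩ := Nat.sInf_mem hex
  exact Nat.sInf_le ⟨hpos, hmap _ L hL⟩

/-- If the diagram of `P'` is a subdiagram of the diagram of `P` (the elements of `P'` form a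
subset of those of `P` and every covering edge of `P'` is a covering edge of `P`), then
`dim_uc(P') ≤ dim_uc(P)`. -/
theorem stmt_15 {α : Type*} [Fintype α] [PartialOrder α] (s : Set α)
    (le' : s → s → Prop) (h : IsPartialOrder s le')
    (hcov : ∀ x y : s, CovRel le' x y → CovRel ((· ≤ ·) : α → α → Prop) (x : α) (y : α)) :
    dimUC le' ≤ dimUC ((· ≤ ·) : α → α → Prop) := by
  have hle : ∀ x y : s, le' x y → (x : α) ≤ y := fun x y hxy =>
    le_of_forall_covRel_le (fun a b hab => (hcov a b hab).1) hxy
  exact dimUC_le_dimUC (exists_isUCRealizer α) fun _ L hL =>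
    ⟨_, hL.comap Subtype.val_injective hle hcov⟩
end
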